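/- Let f_Y be a bounded continuous density on ℝ, I ⊂ ℝ compact with f_Y > 0 on I, and suppose (g_n) is a sequence of nonnegative functions with ∫ g_n(y) dy ≥ c₀ r_n², g_n(y) ≤ c₁ r_n² min{1, 1/y²} for all y, where r_n → ∞, and h_n → 0. Then inf_{x∈I} ∫ g_n(y) f_Y(x − h_n y) dy ≥ (c₀ inf_{x∈I} f_Y(x) − o(1)) r_n² as n → ∞. -/

import Mathlib

/-!
Split `∫ g_n(y) f(x - h_n y) dy = f(x) ∫ g_n + ∫ g_n(y) (f(x - h_n y) - f(x)) dy`. The first term is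
at least `c₀ r_n² inf_I f`. The second is at most `c₁ r_n² Φ(h_n, x)` in absolute value, where
`Φ(t, x) = ∫ min(1, 1/y²) |f(x - t y) - f(x)| dy` is jointly continuous by dominated convergence
and vanishes at `t = 0`; by the tube lemma `Φ(t, ·)` is uniformly small on the compact `I` for
small `t`, so the error is `o(r_n²)` uniformly in `x ∈ I`.
-/

open MeasureTheory Filter Set Topology

theorem exists_tendsto_zero_forall_sub_le {ι α : Type*} {l : Filter ι} {s : Set α}
    {F : ι → α → ℝ} {L : ℝ} (hF : ∀ n, BddBelow (F n '' s))
    (h : ∀ ε > 0, ∀ᶠ n in l, ∀ x ∈ s, L - ε ≤ F n x) :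
    ∃ e : ι → ℝ, Tendsto e l (𝓝 0) ∧ ∀ n, ∀ x ∈ s, L - e n ≤ F n x := by
  set D : ι → Set ℝ := fun n => (fun x => L - F n x) '' s
  have hD : ∀ n, BddAbove (D n) := fun n => by
    obtain ⟨b, hb⟩ := hF n
    exact ⟨L - b, by rintro _ ⟨x, hx, rfl⟩; linarith [hb (mem_image_of_mem _ hx)]⟩
  refine ⟨fun n => max 0 (sSup (D n)), ?_, fun n x hx => ?_⟩
  · rw [Metric.tendsto_nhds]
    intro ε hε
    filter_upwards [h (ε / 2) (half_pos hε)] with n hn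
    have hsup : sSup (D n) ≤ ε / 2 :=
      Real.sSup_le (by rintro _ ⟨x, hx, rfl⟩; linarith [hn x hx]) (half_pos hε).le
    rw [Real.dist_0_eq_abs, abs_of_nonneg (le_max_left _ _)]
    exact (max_le (half_pos hε).le hsup).trans_lt (half_lt_self hε)
  · linarith [le_csSup (hD n) (mem_image_of_mem (fun x => L - F n x) hx),
      le_max_right 0 (sSup (D n))]

section ShiftedIntegral

variable {μ : Measure ℝ} {φ f : ℝ → ℝ} {M : ℝ}

theorem abs_sub_apply_le_two_mul (hM : ∀ x, |f x| ≤ M) (a b : ℝ) : |f a - f b| ≤ 2 * M := by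
  linarith [abs_sub (f a) (f b), hM a, hM b]

theorem integrable_mul_abs_sub_comp (hφ : Integrable φ μ) (hf : Continuous f)
    (hM : ∀ x, |f x| ≤ M) (t x : ℝ) :
    Integrable (fun y => φ y * |f (x - t * y) - f x|) μ :=
  hφ.mul_bdd (by fun_prop : Continuous fun y => |f (x - t * y) - f x|).aestronglyMeasurable
    (Eventually.of_forall fun y => by
      rw [Real.norm_eq_abs, abs_abs]
      exact abs_sub_apply_le_two_mul hM _ _)

theorem continuous_integral_mul_abs_sub_comp (hφ : Integrable φ μ) (hf : Continuous f)
    (hM : ∀ x, |f x| ≤ M) :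
    Continuous fun p : ℝ × ℝ => ∫ y, φ y * |f (p.2 - p.1 * y) - f p.2| ∂μ :=
  continuous_of_dominated (bound := fun y => |φ y| * (2 * M))
    (fun p => (integrable_mul_abs_sub_comp hφ hf hM p.1 p.2).aestronglyMeasurable)
    (fun p => Eventually.of_forall fun y => by
      rw [Real.norm_eq_abs, abs_mul, abs_abs]
      gcongr
      exact abs_sub_apply_le_two_mul hM _ _)
    (hφ.abs.mul_const _) (Eventually.of_forall fun y => by fun_prop)

theorem eventually_forall_integral_mul_abs_sub_comp_lt (hφ : Integrable φ μ)
    (hf : Continuous f) (hM : ∀ x, |f x| ≤ M) {K : Set ℝ} (hK : IsCompact K) {ε : ℝ}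
    (hε : 0 < ε) : ∀ᶠ t in 𝓝 0, ∀ x ∈ K, ∫ y, φ y * |f (x - t * y) - f x| ∂μ < ε := by
  refine hK.eventually_forall_of_forall_eventually fun x _ => ?_
  refine (continuous_integral_mul_abs_sub_comp hφ hf hM).continuousAt.eventually
    (gt_mem_nhds ?_)
  simpa using hε

theorem abs_integral_mul_comp_sub_le {g : ℝ → ℝ} {a : ℝ} (hg : Integrable g μ)
    (hφ : Integrable φ μ) (hf : Continuous f) (hM : ∀ x, |f x| ≤ M)
    (hgφ : ∀ y, |g y| ≤ a * φ y) (t x : ℝ) :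
    |∫ y, g y * f (x - t * y) ∂μ - (∫ y, g y ∂μ) * f x|
      ≤ a * ∫ y, φ y * |f (x - t * y) - f x| ∂μ := by
  have hgf : Integrable (fun y => g y * f (x - t * y)) μ :=
    hg.mul_bdd (hf.comp (by fun_prop)).aestronglyMeasurable (Eventually.of_forall fun _ => hM _)
  rw [← integral_mul_const (f x) g, ← integral_sub hgf (hg.mul_const _), ← integral_const_mul,
    ← Real.norm_eq_abs]
  refine norm_integral_le_of_norm_le ((integrable_mul_abs_sub_comp hφ hf hM t x).const_mul a)
    (Eventually.of_forall fun y => ?_)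
  rw [Real.norm_eq_abs, ← mul_sub, abs_mul, ← mul_assoc]
  exact mul_le_mul_of_nonneg_right (hgφ y) (abs_nonneg _)

end ShiftedIntegral

theorem min_one_one_div_sq_le (y : ℝ) : min 1 (1 / y ^ 2) ≤ 2 * (1 + y ^ 2)⁻¹ := by
  rw [← div_eq_mul_inv]
  rcases le_total (y ^ 2) 1 with hy | hy
  · refine (min_le_left _ _).trans ?_
    rw [le_div_iff₀ (by positivity)]
    linarith
  · refine (min_le_right _ _).trans ?_
    rw [div_le_div_iff₀ (by positivity) (by positivity)]
    linarith

theorem integrable_min_one_one_div_sq : Integrable fun y : ℝ => min 1 (1 / y ^ 2) :=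
  (integrable_inv_one_add_sq.const_mul 2).mono' (by measurability)
    (Eventually.of_forall fun y => by
      rw [Real.norm_eq_abs, abs_of_nonneg (le_min zero_le_one (by positivity))]
      exact min_one_one_div_sq_le y)

theorem stmt9_general (fY : ℝ → ℝ) (hfYcont : Continuous fY) (hfYnonneg : ∀ y, 0 ≤ fY y)
    (M : ℝ) (hfYbd : ∀ y, fY y ≤ M)
    (I : Set ℝ) (hI : IsCompact I)
    (g : ℕ → ℝ → ℝ) (hgnonneg : ∀ n y, 0 ≤ g n y)
    (hgmeas : ∀ n, Measurable (g n))
    (c₀ c₁ : ℝ) (hc₁ : 0 < c₁)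
    (r : ℕ → ℝ) (hrpos : ∀ n, 0 < r n)
    (hglow : ∀ n, c₀ * r n ^ 2 ≤ ∫ y : ℝ, g n y)
    (hgup : ∀ n y, g n y ≤ c₁ * r n ^ 2 * min 1 (1 / y ^ 2))
    (h : ℕ → ℝ) (hh : Tendsto h atTop (nhds 0)) :
    ∃ e : ℕ → ℝ, Tendsto e atTop (nhds 0) ∧
      ∀ n, ∀ x ∈ I,
        (c₀ * sInf (fY '' I) - e n) * r n ^ 2 ≤ ∫ y : ℝ, g n y * fY (x - h n * y) := by
  have hfY_abs : ∀ y, |fY y| ≤ M := fun y =>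
    abs_le.2 ⟨by linarith [hfYnonneg y, hfYbd y], hfYbd y⟩
  have hg_abs : ∀ n y, |g n y| ≤ c₁ * r n ^ 2 * min 1 (1 / y ^ 2) := fun n y => by
    rw [abs_of_nonneg (hgnonneg n y)]; exact hgup n y
  have hgint : ∀ n, Integrable (g n) := fun n =>
    (integrable_min_one_one_div_sq.const_mul _).mono' (hgmeas n).aestronglyMeasurable
      (Eventually.of_forall (hg_abs n))
  have hm : 0 ≤ sInf (fY '' I) := Real.sInf_nonneg (by rintro _ ⟨y, -, rfl⟩; exact hfYnonneg y)
  have hbdd : BddBelow (fY '' I) := ⟨0, by rintro _ ⟨y, -, rfl⟩; exact hfYnonneg y⟩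
  have key : ∀ ε > 0, ∀ᶠ n in atTop, ∀ x ∈ I,
      c₀ * sInf (fY '' I) - ε ≤ (∫ y, g n y * fY (x - h n * y)) / r n ^ 2 := by
    intro ε hε
    filter_upwards [hh.eventually (eventually_forall_integral_mul_abs_sub_comp_lt
      integrable_min_one_one_div_sq hfYcont hfY_abs hI (div_pos hε hc₁))] with n hn x hx
    have hshift := abs_integral_mul_comp_sub_le (hgint n) integrable_min_one_one_div_sq
      hfYcont hfY_abs (hg_abs n) (h n) x
    have hlead : c₀ * r n ^ 2 * sInf (fY '' I) ≤ (∫ y, g n y) * fY x :=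
      mul_le_mul (hglow n) (csInf_le hbdd (mem_image_of_mem fY hx)) hm
        (integral_nonneg (hgnonneg n))
    have herr := mul_le_mul_of_nonneg_right ((lt_div_iff₀ hc₁).1 (hn x hx)).le (sq_nonneg (r n))
    rw [le_div_iff₀ (pow_pos (hrpos n) 2)]
    linarith [(abs_le.1 hshift).1]
  obtain ⟨e, he, hle⟩ := exists_tendsto_zero_forall_sub_le (fun n => ⟨0, by
    rintro _ ⟨x, -, rfl⟩
    exact div_nonneg (integral_nonneg fun y => mul_nonneg (hgnonneg n y) (hfYnonneg _))
      (sq_nonneg _)⟩) key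
  exact ⟨e, he, fun n x hx => (le_div_iff₀ (pow_pos (hrpos n) 2)).1 (hle n x hx)⟩

/-- Abstract version of the variance lower bound step: if `f_Y` is a bounded continuous
density, positive on a compact set `I`, and `g_n ≥ 0` satisfy `∫ g_n ≥ c₀ r_n²` and
`g_n(y) ≤ c₁ r_n² min{1, 1/y²}`, with `r_n → ∞` and `h_n → 0`, then
`inf_{x∈I} ∫ g_n(y) f_Y(x - h_n y) dy ≥ (c₀ inf_I f_Y - o(1)) r_n²`. -/
theorem stmt9 (fY : ℝ → ℝ) (hfYcont : Continuous fY) (hfYnonneg : ∀ y, 0 ≤ fY y)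
    (hfYint : (∫ y : ℝ, fY y) = 1) (M : ℝ) (hfYbd : ∀ y, fY y ≤ M)
    (I : Set ℝ) (hI : IsCompact I) (hIne : I.Nonempty) (hfYpos : ∀ x ∈ I, 0 < fY x)
    (g : ℕ → ℝ → ℝ) (hgnonneg : ∀ n y, 0 ≤ g n y)
    (hgmeas : ∀ n, Measurable (g n))
    (c₀ c₁ : ℝ) (hc₀ : 0 < c₀) (hc₁ : 0 < c₁)
    (r : ℕ → ℝ) (hrpos : ∀ n, 0 < r n) (hr : Tendsto r atTop atTop)
    (hglow : ∀ n, c₀ * r n ^ 2 ≤ ∫ y : ℝ, g n y)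
    (hgup : ∀ n y, g n y ≤ c₁ * r n ^ 2 * min 1 (1 / y ^ 2))
    (h : ℕ → ℝ) (hhpos : ∀ n, 0 < h n) (hh : Tendsto h atTop (nhds 0)) :
    ∃ e : ℕ → ℝ, Tendsto e atTop (nhds 0) ∧
      ∀ n, ∀ x ∈ I,
        (c₀ * sInf (fY '' I) - e n) * r n ^ 2 ≤ ∫ y : ℝ, g n y * fY (x - h n * y) :=
  stmt9_general fY hfYcont hfYnonneg M hfYbd I hI g hgnonneg hgmeas c₀ c₁ hc₁ r hrpos hglow hgup h
    hh
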